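/- For every odd prime p, every i ∈ (ZMod p) ∪ {∞} and every j ∈ ZMod p, the subgroup A_{i,j} of the Heisenberg group H_p has order p, its elements are A_{i,j} = {(μ, μ·i, (μ(μ-1)/2)·i + μ·j) : μ ∈ ZMod p} for i ∈ ZMod p and A_{∞,j} = {(0, μ, μ·j) : μ ∈ ZMod p}, and the normalizer of A_{i,j} in H_p equals N_i. -/

import Mathlib

@[ext]
structure Heis (p : ℕ) where
  x : ZMod p
  y : ZMod p
  z : ZMod p

namespace Heis

variable {p : ℕ}

instance : Mul (Heis p) := ⟨fun a b => ⟨a.x + b.x, a.y + b.y, a.z + b.z + a.x * b.y⟩⟩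
instance : One (Heis p) := ⟨⟨0, 0, 0⟩⟩
instance : Inv (Heis p) := ⟨fun a => ⟨-a.x, -a.y, a.x * a.y - a.z⟩⟩

lemma mul_def (a b : Heis p) :
    a * b = ⟨a.x + b.x, a.y + b.y, a.z + b.z + a.x * b.y⟩ := rfl
lemma one_def : (1 : Heis p) = ⟨0, 0, 0⟩ := rfl
lemma inv_def (a : Heis p) : a⁻¹ = ⟨-a.x, -a.y, a.x * a.y - a.z⟩ := rfl

instance instGroup : Group (Heis p) where
  mul_assoc a b c := by ext <;> simp [mul_def] <;> ring
  one_mul a := by ext <;> simp [mul_def, one_def]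
  mul_one a := by ext <;> simp [mul_def, one_def]
  inv_mul_cancel a := by ext <;> simp [mul_def, inv_def, one_def]

end Heis

/-- The subgroups N_i of order p²; `some i` is N_i for i ∈ ZMod p, `none` is N_∞. -/
def N (p : ℕ) : Option (ZMod p) → Subgroup (Heis p)
  | some i =>
    { carrier := {g | g.y = g.x * i}
      one_mem' := by simp [Heis.one_def]
      mul_mem' := by
        intro a b ha hb
        simp only [Set.mem_setOf_eq, Heis.mul_def] at *
        rw [ha, hb]; ring
      inv_mem' := by
        intro a ha
        simp only [Set.mem_setOf_eq, Heis.inv_def] at *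
        rw [ha]; ring }
  | none =>
    { carrier := {g | g.x = 0}
      one_mem' := by simp [Heis.one_def]
      mul_mem' := by
        intro a b ha hb
        simp only [Set.mem_setOf_eq, Heis.mul_def] at *
        rw [ha, hb]; ring
      inv_mem' := by
        intro a ha
        simp only [Set.mem_setOf_eq, Heis.inv_def] at *
        rw [ha]; ring }

/-- The cyclic subgroups A_{i,j} of order p; `A p (some i) j = ⟨(1,i,j)⟩`,
`A p none j = ⟨(0,1,j)⟩`. -/
def A (p : ℕ) : Option (ZMod p) → ZMod p → Subgroup (Heis p)
  | some i, j => Subgroup.zpowers (⟨1, i, j⟩ : Heis p)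
  | none, j => Subgroup.zpowers (⟨0, 1, j⟩ : Heis p)

/-! The commutator `⁅g, h⁆` is the central element `(0, 0, g.x * h.y - g.y * h.x)`, and `N_i` is
the centralizer of the generator `a` of `A_{i,j}`. If `g` normalizes `A_{i,j}`, then
`⁅g, a⁆ = (g a g⁻¹) a⁻¹` is a central element of `A_{i,j}`; but `A_{i,j}` meets the centre
trivially, so `g` commutes with `a`. Conversely the centralizer of a set lies in its normalizer.
The elements and the order of `A_{i,j}` come from the closed form of the powers of `a`, where
`μ (μ - 1) / 2` makes sense because `2` is invertible modulo an odd `p`. -/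

open scoped commutatorElement

namespace Heis

variable {p : ℕ}

theorem commutatorElement_eq (g h : Heis p) :
    ⁅g, h⁆ = ⟨0, 0, g.x * h.y - g.y * h.x⟩ := by
  ext <;> simp only [commutatorElement_def, mul_def, inv_def] <;> ring

def gen : Option (ZMod p) → ZMod p → Heis p
  | some i, j => ⟨1, i, j⟩
  | none, j => ⟨0, 1, j⟩

def param : Option (ZMod p) → ZMod p → ZMod p → Heis p
  | some i, j, μ => ⟨μ, μ * i, μ * (μ - 1) * (2 : ZMod p)⁻¹ * i + μ * j⟩
  | none, j, μ => ⟨0, μ, μ * j⟩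

theorem param_injective (i : Option (ZMod p)) (j : ZMod p) :
    Function.Injective (param i j) := by
  cases i with
  | none => exact fun μ ν h => congrArg Heis.y h
  | some i => exact fun μ ν h => congrArg Heis.x h

theorem param_zero (i : Option (ZMod p)) (j : ZMod p) : param i j 0 = 1 := by
  cases i <;> ext <;> simp [param, one_def]

theorem param_add_one (h2 : IsUnit (2 : ZMod p)) (i : Option (ZMod p)) (j μ : ZMod p) :
    param i j (μ + 1) = param i j μ * gen i j := by
  cases i with
  | none => ext <;> simp only [param, gen, mul_def] <;> ring
  | some i =>
    ext <;> simp only [param, gen, mul_def]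
    · ring
    · linear_combination (μ * i) * ZMod.mul_inv_of_unit 2 h2

theorem gen_zpow (h2 : IsUnit (2 : ZMod p)) (i : Option (ZMod p)) (j : ZMod p) (k : ℤ) :
    gen i j ^ k = param i j k := by
  induction k using Int.induction_on with
  | zero => simp [param_zero]
  | succ k ih => rw [zpow_add_one, ih, Int.cast_add, Int.cast_one, param_add_one h2]
  | pred k ih =>
    rw [zpow_sub_one, ih, mul_inv_eq_iff_eq_mul, ← param_add_one h2, Int.cast_sub, Int.cast_one,
      sub_add_cancel]

end Heis

section

open Heis

variable {p : ℕ}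

theorem A_eq_zpowers_gen (i : Option (ZMod p)) (j : ZMod p) :
    A p i j = Subgroup.zpowers (gen i j) := by
  cases i <;> rfl

theorem coe_A (h2 : IsUnit (2 : ZMod p)) (i : Option (ZMod p)) (j : ZMod p) :
    (A p i j : Set (Heis p)) = Set.range (param i j) := by
  rw [A_eq_zpowers_gen, Subgroup.coe_zpowers, ← ZMod.intCast_surjective.range_comp]
  exact congrArg Set.range (funext (gen_zpow h2 i j))

theorem card_A (h2 : IsUnit (2 : ZMod p)) (i : Option (ZMod p)) (j : ZMod p) :
    Nat.card (A p i j) = p := by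
  rw [← SetLike.coe_sort_coe, coe_A h2, Nat.card_range_of_injective (param_injective i j),
    Nat.card_zmod]

theorem eq_zero_of_mk_mem_A (h2 : IsUnit (2 : ZMod p)) {i : Option (ZMod p)} {j c : ZMod p}
    (hc : (⟨0, 0, c⟩ : Heis p) ∈ A p i j) : c = 0 := by
  rw [← SetLike.mem_coe, coe_A h2] at hc
  obtain ⟨μ, hμ⟩ := hc
  obtain rfl : μ = 0 := by
    cases i with
    | none => exact congrArg Heis.y hμ
    | some i => exact congrArg Heis.x hμ
  rw [param_zero] at hμ
  exact (congrArg Heis.z hμ).symm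

theorem mem_N_iff_commutatorElement_eq_one (i : Option (ZMod p)) (j : ZMod p) (g : Heis p) :
    g ∈ N p i ↔ ⁅g, gen i j⁆ = 1 := by
  cases i <;> simp [N, gen, commutatorElement_eq, one_def, sub_eq_zero, eq_comm]

theorem N_le_normalizer_A (i : Option (ZMod p)) (j : ZMod p) :
    N p i ≤ Subgroup.normalizer (A p i j : Set (Heis p)) := by
  refine le_trans ?_ (Subgroup.centralizer_le_normalizer _)
  rw [Subgroup.le_centralizer_iff, A_eq_zpowers_gen, Subgroup.zpowers_le]
  exact Subgroup.mem_centralizer_iff.mpr fun g hg =>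
    commutatorElement_eq_one_iff_mul_comm.mp ((mem_N_iff_commutatorElement_eq_one i j g).mp hg)

theorem normalizer_A_le_N (h2 : IsUnit (2 : ZMod p)) (i : Option (ZMod p)) (j : ZMod p) :
    Subgroup.normalizer (A p i j : Set (Heis p)) ≤ N p i := by
  intro g hg
  have hgen : gen i j ∈ A p i j := A_eq_zpowers_gen i j ▸ Subgroup.mem_zpowers _
  have hcomm : ⁅g, gen i j⁆ ∈ A p i j :=
    mul_mem ((Subgroup.mem_normalizer_iff.mp hg _).mp hgen) (inv_mem hgen)
  rw [commutatorElement_eq] at hcomm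
  rw [mem_N_iff_commutatorElement_eq_one i j, commutatorElement_eq, eq_zero_of_mk_mem_A h2 hcomm]
  rfl

theorem normalizer_A (h2 : IsUnit (2 : ZMod p)) (i : Option (ZMod p)) (j : ZMod p) :
    Subgroup.normalizer (A p i j : Set (Heis p)) = N p i :=
  le_antisymm (normalizer_A_le_N h2 i j) (N_le_normalizer_A i j)

end

theorem ZMod.isUnit_two_of_odd {p : ℕ} (ho : Odd p) : IsUnit (2 : ZMod p) := by
  simpa using (ZMod.isUnit_iff_coprime 2 p).mpr (Nat.coprime_two_left.mpr ho)

theorem heisenberg_A_card_elements_normalizer (p : ℕ) (ho : Odd p) :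
    (∀ i j : ZMod p,
      Nat.card (A p (some i) j) = p ∧
      (A p (some i) j : Set (Heis p)) =
        {g | ∃ μ : ZMod p, g = ⟨μ, μ * i, μ * (μ - 1) * (2 : ZMod p)⁻¹ * i + μ * j⟩} ∧
      Subgroup.normalizer (A p (some i) j : Set (Heis p)) = N p (some i)) ∧
    ∀ j : ZMod p,
      Nat.card (A p none j) = p ∧
      (A p none j : Set (Heis p)) = {g | ∃ μ : ZMod p, g = ⟨0, μ, μ * j⟩} ∧
      Subgroup.normalizer (A p none j : Set (Heis p)) = N p none := by
  have h2 := ZMod.isUnit_two_of_odd ho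
  have coe_A_eq (i : Option (ZMod p)) (j : ZMod p) :
      (A p i j : Set (Heis p)) = {g | ∃ μ, g = Heis.param i j μ} :=
    (coe_A h2 i j).trans (Set.ext fun _ => exists_congr fun _ => eq_comm)
  exact ⟨fun i j => ⟨card_A h2 _ _, coe_A_eq _ _, normalizer_A h2 _ _⟩,
    fun j => ⟨card_A h2 _ _, coe_A_eq _ _, normalizer_A h2 _ _⟩⟩
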